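/- Let 0 < θ ≤ 1 be a smooth function on (0,∞) with θ'' + ((1−2s)/ξ)θ' = θ, θ(0⁺) = 1, θ(∞) = 0 and −ξ^{1−2s}θ'(ξ) → 1 as ξ → 0⁺, where s ∈ (0,1). Then for every m > 0 and every φ ∈ C^∞_c([0,∞)), ∫_0^∞ ξ^{1−2s}[ m²(θ'(mξ))² φ(ξ)² + m² θ(mξ)² φ(ξ)² + 2m θ'(mξ)θ(mξ) φ(ξ) φ'(ξ)·0 + m θ(mξ)θ'(mξ) (φ²)'(ξ) ] dξ = −m^{2s} φ(0)², i.e. ∫_0^∞ ξ^{1−2s}[ m²(θ'(mξ))² + m² θ(mξ)² ] φ(ξ)² dξ + ∫_0^∞ ξ^{1−2s} m θ(mξ)θ'(mξ) (φ²)'(ξ) dξ = m^{2s} φ(0)². -/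

import Mathlib

open MeasureTheory Filter Set

set_option maxHeartbeats 2000000 in
theorem stmt_14 (s : ℝ) (hs : s ∈ Set.Ioo (0:ℝ) 1) (θ : ℝ → ℝ)
    (hsmooth : ContDiffOn ℝ (⊤ : ℕ∞) θ (Set.Ioi 0))
    (hbd : ∀ ξ > 0, 0 < θ ξ ∧ θ ξ ≤ 1)
    (hode : ∀ ξ > 0, deriv (deriv θ) ξ + (1-2*s)/ξ * deriv θ ξ = θ ξ)
    (h0 : Tendsto θ (nhdsWithin 0 (Set.Ioi 0)) (nhds 1))
    (hinf : Tendsto θ atTop (nhds 0))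
    (hflux : Tendsto (fun ξ => -ξ^(1-2*s) * deriv θ ξ)
      (nhdsWithin 0 (Set.Ioi 0)) (nhds 1)) :
    ∀ m : ℝ, 0 < m → ∀ φ : ℝ → ℝ, ContDiff ℝ (⊤ : ℕ∞) φ → HasCompactSupport φ →
      (∫ ξ in Set.Ioi (0:ℝ),
          ξ^(1-2*s) * (m^2 * (deriv θ (m*ξ))^2 + m^2 * (θ (m*ξ))^2) * (φ ξ)^2)
      + (∫ ξ in Set.Ioi (0:ℝ),
          ξ^(1-2*s) * (m * θ (m*ξ) * deriv θ (m*ξ)) * deriv (fun t => (φ t)^2) ξ)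
      = m^(2*s) * (φ 0)^2 := by
  obtain ⟨hs0, hs1⟩ := hs
  intro m hm φ hφ hφc
  -- basic smoothness facts
  have hsmooth' : ContDiffOn ℝ (⊤ : ℕ∞) (deriv θ) (Set.Ioi 0) :=
    hsmooth.deriv_of_isOpen isOpen_Ioi (by exact_mod_cast le_top)
  have hθd : ∀ x ∈ Ioi (0:ℝ), HasDerivAt θ (deriv θ x) x := fun x hx =>
    ((hsmooth.contDiffAt (isOpen_Ioi.mem_nhds hx)).differentiableAt (by simp)).hasDerivAt
  have hθ'd : ∀ x ∈ Ioi (0:ℝ), HasDerivAt (deriv θ) (deriv (deriv θ) x) x := fun x hx =>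
    ((hsmooth'.contDiffAt (isOpen_Ioi.mem_nhds hx)).differentiableAt (by simp)).hasDerivAt
  have hθcont : ContinuousOn θ (Ioi 0) := hsmooth.continuousOn
  have hθ'cont : ContinuousOn (deriv θ) (Ioi 0) := hsmooth'.continuousOn
  -- named integrands
  set g1 : ℝ → ℝ := fun ξ =>
    ξ^(1-2*s) * (m^2 * (deriv θ (m*ξ))^2 + m^2 * (θ (m*ξ))^2) * (φ ξ)^2 with hg1def
  set g2 : ℝ → ℝ := fun ξ =>
    ξ^(1-2*s) * (m * θ (m*ξ) * deriv θ (m*ξ)) * deriv (fun t => (φ t)^2) ξ with hg2def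
  set L : ℝ := -(m^(2*s) * (φ 0)^2) with hLdef
  set F : ℝ → ℝ := fun ξ =>
    ξ^(1-2*s) * (m * θ (m*ξ) * deriv θ (m*ξ)) * (φ ξ)^2 with hFdef
  set Ft : ℝ → ℝ := fun ξ => if ξ ≤ 0 then L else F ξ with hFtdef
  -- bounds on φ and deriv φ²
  obtain ⟨Cφ, hCφ⟩ := hφc.exists_bound_of_continuous hφ.continuous
  have hφ2c : HasCompactSupport (fun t => (φ t)^2) :=
    hφc.comp_left (g := fun x : ℝ => x^2) (by simp)
  have hφ2smooth : ContDiff ℝ (⊤ : ℕ∞) (fun t => (φ t)^2) := hφ.pow 2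
  obtain ⟨Cq, hCq⟩ := (hφ2c.deriv).exists_bound_of_continuous
    (hφ2smooth.continuous_deriv (by simp))
  have hφ2d : ∀ ξ : ℝ, HasDerivAt (fun t => (φ t)^2) (deriv (fun t => (φ t)^2) ξ) ξ :=
    fun ξ => ((hφ2smooth.differentiable (by simp)) ξ).hasDerivAt
  -- support bound
  obtain ⟨R0, hR0⟩ := (hφ2c.isCompact.isBounded).subset_closedBall 0
  have hφ0 : ∀ ξ : ℝ, R0 < |ξ| → (φ ξ)^2 = 0 := by
    intro ξ hξ
    apply image_eq_zero_of_notMem_tsupport (f := fun t => (φ t)^2)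
    intro h
    have := hR0 h
    simp [Metric.mem_closedBall, Real.dist_eq] at this
    linarith
  have hq0 : ∀ ξ : ℝ, R0 < |ξ| → deriv (fun t => (φ t)^2) ξ = 0 := by
    intro ξ hξ
    by_contra h
    have := hR0 (support_deriv_subset (Function.mem_support.mpr h))
    simp [Metric.mem_closedBall, Real.dist_eq] at this
    linarith
  -- flux bound near zero
  obtain ⟨δ, hδ0, hδ⟩ : ∃ δ > 0, ∀ x : ℝ, 0 < x → x < δ → |x^(1-2*s) * deriv θ x| ≤ 2 := by
    have hev : ∀ᶠ x in nhdsWithin 0 (Set.Ioi 0), |x^(1-2*s) * deriv θ x| ≤ 2 := by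
      have h2 := Metric.tendsto_nhds.mp hflux 1 one_pos
      filter_upwards [h2] with x hx
      rw [Real.dist_eq] at hx
      have h3 : |(-x^(1-2*s) * deriv θ x)| ≤ 2 := by
        have := abs_sub_abs_le_abs_sub (-x^(1-2*s) * deriv θ x) 1
        simp only [abs_one] at this
        linarith
      rw [neg_mul, abs_neg] at h3
      exact h3
    rw [eventually_nhdsWithin_iff, Metric.eventually_nhds_iff] at hev
    obtain ⟨ε', hε', h⟩ := hev
    refine ⟨ε', hε', fun x hx1 hx2 => h ?_ hx1⟩
    rw [Real.dist_eq, sub_zero, abs_of_pos hx1]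
    exact hx2
  -- derivative bound near zero
  have hbnd : ∀ x : ℝ, 0 < x → x < δ → |deriv θ x| ≤ 2 * x^(2*s-1) := by
    intro x hx1 hx2
    have hxp : (0:ℝ) < x^(1-2*s) := Real.rpow_pos_of_pos hx1 _
    have h1 := hδ x hx1 hx2
    rw [abs_mul, abs_of_pos hxp] at h1
    have hinv : x^(2*s-1) = (x^(1-2*s))⁻¹ := by
      rw [← Real.rpow_neg hx1.le]
      congr 1
      ring
    have h2 : |deriv θ x| ≤ 2 / x^(1-2*s) := by
      rw [le_div_iff₀ hxp]
      nlinarith [abs_nonneg (deriv θ x)]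
    rw [hinv]
    calc |deriv θ x| ≤ 2 / x^(1-2*s) := h2
      _ = 2 * (x^(1-2*s))⁻¹ := by ring
  -- the derivative identity
  have hder : ∀ ξ ∈ Ioi (0:ℝ), HasDerivAt F (g1 ξ + g2 ξ) ξ := by
    intro ξ hξ
    have hξ0 : (0:ℝ) < ξ := hξ
    have hmξ : 0 < m*ξ := mul_pos hm hξ0
    have hP : HasDerivAt (fun x:ℝ => x^(1-2*s)) ((1-2*s) * ξ^(1-2*s-1)) ξ :=
      Real.hasDerivAt_rpow_const (Or.inl hξ0.ne')
    have hlin : HasDerivAt (fun x => m*x) m ξ := by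
      simpa using (hasDerivAt_id ξ).const_mul m
    have hA : HasDerivAt (fun x => θ (m*x)) (deriv θ (m*ξ) * m) ξ :=
      (hθd _ hmξ).comp ξ hlin
    have hB : HasDerivAt (fun x => deriv θ (m*x)) (deriv (deriv θ) (m*ξ) * m) ξ :=
      (hθ'd _ hmξ).comp ξ hlin
    have hQ := (hA.const_mul m).mul hB
    have hFd := (hP.mul hQ).mul (hφ2d ξ)
    have hc : deriv (deriv θ) (m*ξ) = θ (m*ξ) - (1-2*s)/(m*ξ) * deriv θ (m*ξ) := by
      have := hode (m*ξ) hmξ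
      linarith
    have hpow : ξ^(1-2*s-1) = ξ^(1-2*s) / ξ := Real.rpow_sub_one hξ0.ne' _
    refine HasDerivAt.congr_deriv hFd ?_
    symm
    rw [hc, hpow]
    simp only [hg1def, hg2def, Pi.mul_apply]
    field_simp
    ring
  -- integrability
  set ε : ℝ := min (δ/(2*m)) 1 with hεdef
  have hε0 : 0 < ε := lt_min (by positivity) one_pos
  set R : ℝ := max R0 ε + 1 with hRdef
  have hεR : ε ≤ R := by
    have := le_max_right R0 ε
    simp only [hRdef]; linarith
  have hRR0 : R0 < R := by
    have := le_max_left R0 ε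
    simp only [hRdef]; linarith
  have hR0pos : 0 < R := lt_of_lt_of_le hε0 hεR
  have hmxδ : ∀ x ∈ Ioc (0:ℝ) ε, 0 < m*x ∧ m*x < δ := by
    intro x hx
    refine ⟨mul_pos hm hx.1, ?_⟩
    have h1 : x ≤ δ/(2*m) := le_trans hx.2 (min_le_left _ _)
    have h2 : m*x ≤ δ/2 := by
      have hmne : m ≠ 0 := hm.ne'
      calc m*x ≤ m*(δ/(2*m)) := by nlinarith
        _ = δ/2 := by field_simp
    linarith
  have helper : ∀ (g : ℝ → ℝ) (C1 C2 C3 : ℝ), ContinuousOn g (Ioi 0) →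
      (∀ x : ℝ, R < x → g x = 0) →
      (∀ x ∈ Ioc (0:ℝ) ε, |g x| ≤ C1 * x^(2*s-1) + C2 * x^(1-2*s) + C3) →
      IntegrableOn g (Ioi 0) := by
    intro g C1 C2 C3 hgc hgz hgb
    have hIa : IntegrableOn g (Ioc 0 ε) := by
      have hr1 : IntegrableOn (fun x : ℝ => x^(2*s-1)) (Ioc 0 ε) :=
        (intervalIntegrable_iff_integrableOn_Ioc_of_le hε0.le).mp
          (intervalIntegral.intervalIntegrable_rpow' (by linarith))
      have hr2 : IntegrableOn (fun x : ℝ => x^(1-2*s)) (Ioc 0 ε) :=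
        (intervalIntegrable_iff_integrableOn_Ioc_of_le hε0.le).mp
          (intervalIntegral.intervalIntegrable_rpow' (by linarith))
      have hbint : IntegrableOn (fun x => C1 * x^(2*s-1) + C2 * x^(1-2*s) + C3) (Ioc 0 ε) :=
        ((hr1.const_mul C1).add (hr2.const_mul C2)).add (integrableOn_const
          measure_Ioc_lt_top.ne)
      refine Integrable.mono' hbint ?_ ?_
      · exact (hgc.mono (fun x hx => hx.1)).aestronglyMeasurable measurableSet_Ioc
      · filter_upwards [ae_restrict_mem measurableSet_Ioc] with x hx
        simpa [Real.norm_eq_abs] using hgb x hx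
    have hIb : IntegrableOn g (Ioc ε R) := by
      have hsub : Icc ε R ⊆ Ioi (0:ℝ) := fun x hx => lt_of_lt_of_le hε0 hx.1
      exact ((hgc.mono hsub).integrableOn_Icc).mono_set Ioc_subset_Icc_self
    have hIc : IntegrableOn g (Ioi R) := by
      have heq : EqOn (0 : ℝ → ℝ) g (Ioi R) := fun x hx => (hgz x hx).symm
      exact (integrableOn_zero).congr_fun heq measurableSet_Ioi
    have := (hIa.union hIb).union hIc
    rwa [Ioc_union_Ioc_eq_Ioc hε0.le hεR, Ioc_union_Ioi_eq_Ioi (le_trans hε0.le hεR)] at this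
  -- continuity helpers
  have hmulc : ContinuousOn (fun ξ:ℝ => m*ξ) (Ioi 0) := (continuous_const.mul continuous_id).continuousOn
  have hmaps : MapsTo (fun ξ:ℝ => m*ξ) (Ioi 0) (Ioi 0) := fun x hx => mul_pos hm hx
  have hca : ContinuousOn (fun ξ => θ (m*ξ)) (Ioi 0) := hθcont.comp hmulc hmaps
  have hcb : ContinuousOn (fun ξ => deriv θ (m*ξ)) (Ioi 0) := hθ'cont.comp hmulc hmaps
  have hrp : ContinuousOn (fun ξ:ℝ => ξ^(1-2*s)) (Ioi 0) := fun x hx =>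
    (Real.continuousAt_rpow_const x _ (Or.inl (ne_of_gt hx))).continuousWithinAt
  -- abstract bound data on Ioc 0 ε
  have hdata : ∀ x ∈ Ioc (0:ℝ) ε,
      x^(1-2*s) * x^(2*s-1) = 1 ∧ |θ (m*x)| ≤ 1 ∧
      |deriv θ (m*x)| ≤ 2*(m^(2*s-1) * x^(2*s-1)) ∧ (φ x)^2 ≤ Cφ^2 := by
    intro x hx
    obtain ⟨hmx, hmxd⟩ := hmxδ x hx
    refine ⟨?_, ?_, ?_, ?_⟩
    · rw [← Real.rpow_add hx.1]
      norm_num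
    · obtain ⟨h1, h2⟩ := hbd (m*x) hmx
      rw [abs_of_pos h1]; exact h2
    · have := hbnd (m*x) hmx hmxd
      rwa [Real.mul_rpow hm.le hx.1.le] at this
    · have h1 := hCφ x
      rw [Real.norm_eq_abs] at h1
      nlinarith [abs_nonneg (φ x), sq_abs (φ x)]
  have hint1 : IntegrableOn g1 (Ioi 0) := by
    apply helper g1 (4*m^2*m^(4*s-2)*Cφ^2) (m^2*Cφ^2) 0
    · exact (hrp.mul ((continuousOn_const.mul (hcb.pow 2)).add
        (continuousOn_const.mul (hca.pow 2)))).mul ((hφ.continuous.pow 2).continuousOn)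
    · intro x hx
      have : (φ x)^2 = 0 := hφ0 x (by rw [abs_of_pos (lt_trans hR0pos hx)]; exact lt_trans hRR0 hx)
      simp [hg1def, this]
    · intro x hx
      obtain ⟨huv, ha, hb, hp⟩ := hdata x hx
      have hu : (0:ℝ) < x^(1-2*s) := Real.rpow_pos_of_pos hx.1 _
      have hv : (0:ℝ) < x^(2*s-1) := Real.rpow_pos_of_pos hx.1 _
      have hb2 : (deriv θ (m*x))^2 ≤ 4*(m^(2*s-1))^2*(x^(2*s-1))^2 := by
        nlinarith [abs_nonneg (deriv θ (m*x)), sq_abs (deriv θ (m*x))]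
      have ha2 : (θ (m*x))^2 ≤ 1 := by nlinarith [sq_abs (θ (m*x)), abs_nonneg (θ (m*x))]
      have hmain : |g1 x| = x^(1-2*s) * (m^2 * (deriv θ (m*x))^2 + m^2 * (θ (m*x))^2) * (φ x)^2 := by
        apply abs_of_nonneg
        positivity
      rw [hmain]
      have hstep : x^(1-2*s) * (m^2 * (deriv θ (m*x))^2 + m^2 * (θ (m*x))^2) * (φ x)^2
          ≤ x^(1-2*s) * (m^2 * (4*(m^(2*s-1))^2*(x^(2*s-1))^2) + m^2 * 1) * Cφ^2 := by
        gcongr <;> first | positivity | assumption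
      refine le_trans hstep (le_of_eq ?_)
      have hm2 : (m^(2*s-1))^2 = m^(4*s-2) := by
        rw [← Real.rpow_natCast (m^(2*s-1)) 2, ← Real.rpow_mul hm.le]
        congr 1
        push_cast
        ring
      rw [hm2]
      linear_combination (4*m^2*m^(4*s-2)*Cφ^2*(x^(2*s-1))) * huv
  have hint2 : IntegrableOn g2 (Ioi 0) := by
    apply helper g2 0 0 (2*m*m^(2*s-1)*Cq)
    · exact (hrp.mul ((continuousOn_const.mul hca).mul hcb)).mul
        ((hφ2smooth.continuous_deriv (by simp)).continuousOn)
    · intro x hx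
      have : deriv (fun t => (φ t)^2) x = 0 := hq0 x
        (by rw [abs_of_pos (lt_trans hR0pos hx)]; exact lt_trans hRR0 hx)
      simp [hg2def, this]
    · intro x hx
      obtain ⟨huv, ha, hb, hp⟩ := hdata x hx
      have hu : (0:ℝ) < x^(1-2*s) := Real.rpow_pos_of_pos hx.1 _
      have hv : (0:ℝ) < x^(2*s-1) := Real.rpow_pos_of_pos hx.1 _
      have hq : |deriv (fun t => (φ t)^2) x| ≤ Cq := by
        have := hCq x; rwa [Real.norm_eq_abs] at this
      have hmain : |g2 x| = x^(1-2*s) * (m * |θ (m*x)| * |deriv θ (m*x)|) * |deriv (fun t => (φ t)^2) x| := by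
        simp only [hg2def]
        rw [abs_mul, abs_mul, abs_mul, abs_mul]
        rw [abs_of_pos hu, abs_of_pos hm]
      rw [hmain]
      have hstep : x^(1-2*s) * (m * |θ (m*x)| * |deriv θ (m*x)|) * |deriv (fun t => (φ t)^2) x|
          ≤ x^(1-2*s) * (m * 1 * (2*(m^(2*s-1) * x^(2*s-1)))) * Cq := by
        gcongr <;> first | positivity | assumption
      refine le_trans hstep (le_of_eq ?_)
      linear_combination (2*m*m^(2*s-1)*Cq) * huv
  -- limit at 0+
  have hlim0 : Tendsto F (nhdsWithin 0 (Set.Ioi 0)) (nhds L) := by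
    have hmul : Tendsto (fun ξ:ℝ => m*ξ) (nhdsWithin 0 (Ioi 0)) (nhdsWithin 0 (Ioi 0)) := by
      apply tendsto_nhdsWithin_of_tendsto_nhds_of_eventually_within
      · have h1 : Tendsto (fun ξ:ℝ => m*ξ) (nhds 0) (nhds (m*0)) :=
          (continuous_const.mul continuous_id).tendsto (0:ℝ)
        rw [mul_zero] at h1
        exact h1.mono_left nhdsWithin_le_nhds
      · filter_upwards [self_mem_nhdsWithin] with x hx
        exact mul_pos hm hx
    have hG : Tendsto (fun ξ => -(m*ξ)^(1-2*s) * deriv θ (m*ξ)) (nhdsWithin 0 (Ioi 0)) (nhds 1) :=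
      hflux.comp hmul
    have hθm : Tendsto (fun ξ => θ (m*ξ)) (nhdsWithin 0 (Ioi 0)) (nhds 1) := h0.comp hmul
    have hφm : Tendsto (fun ξ => (φ ξ)^2) (nhdsWithin 0 (Ioi 0)) (nhds ((φ 0)^2)) :=
      ((hφ.continuous.pow 2).tendsto 0).mono_left nhdsWithin_le_nhds
    have hcomb : Tendsto (fun ξ => m^(2*s) * (-(-(m*ξ)^(1-2*s) * deriv θ (m*ξ))) * θ (m*ξ) * (φ ξ)^2)
        (nhdsWithin 0 (Ioi 0)) (nhds (m^(2*s) * (-(1:ℝ)) * 1 * (φ 0)^2)) :=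
      ((tendsto_const_nhds.mul hG.neg).mul hθm).mul hφm
    have hval : (m^(2*s) * (-(1:ℝ)) * 1 * (φ 0)^2) = L := by rw [hLdef]; ring
    rw [hval] at hcomb
    apply hcomb.congr'
    filter_upwards [self_mem_nhdsWithin] with x hx
    have hx0 : (0:ℝ) < x := hx
    have h1 : (m*x)^(1-2*s) = m^(1-2*s)*x^(1-2*s) := Real.mul_rpow hm.le hx0.le
    have h2 : m^(2*s)*m^(1-2*s) = m := by
      rw [← Real.rpow_add hm]
      norm_num
    simp only [hFdef]
    rw [h1]
    linear_combination (x^(1-2*s) * deriv θ (m*x) * θ (m*x) * (φ x)^2) * h2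
  -- limit at infinity
  have hlimtop : Tendsto Ft atTop (nhds 0) := by
    refine Tendsto.congr' ?_ (tendsto_const_nhds (x := (0:ℝ)))
    filter_upwards [eventually_gt_atTop R] with x hx
    have hx0 : 0 < x := lt_trans hR0pos hx
    have hphi : (φ x)^2 = 0 := hφ0 x (by rw [abs_of_pos hx0]; exact lt_trans hRR0 hx)
    simp [hFtdef, hFdef, not_le.mpr hx0, hphi]
  -- continuity of Ft at 0 within Ici
  have hcont : ContinuousWithinAt Ft (Ici 0) 0 := by
    have h1 : Tendsto Ft (nhdsWithin 0 (Ioi 0)) (nhds L) := by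
      apply hlim0.congr'
      filter_upwards [self_mem_nhdsWithin] with x hx
      simp [hFtdef, not_le.mpr (mem_Ioi.mp hx)]
    have h2 : Tendsto Ft (nhdsWithin 0 (Ici 0)) (nhds L) := by
      rw [show (Ici (0:ℝ)) = insert 0 (Ioi 0) by simp [Set.Ioi_insert], nhdsWithin_insert,
        tendsto_sup]
      refine ⟨?_, h1⟩
      have : Ft 0 = L := by simp [hFtdef]
      rw [← this]
      exact tendsto_pure_nhds Ft 0
    have : Ft 0 = L := by simp [hFtdef]
    unfold ContinuousWithinAt
    rw [this]
    exact h2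
  have hderFt : ∀ x ∈ Ioi (0:ℝ), HasDerivAt Ft (g1 x + g2 x) x := by
    intro x hx
    apply (hder x hx).congr_of_eventuallyEq
    filter_upwards [isOpen_Ioi.mem_nhds hx] with y hy
    simp [hFtdef, not_le.mpr (mem_Ioi.mp hy)]
  have hintsum : IntegrableOn (fun x => g1 x + g2 x) (Ioi 0) := hint1.add hint2
  have key := integral_Ioi_of_hasDerivAt_of_tendsto hcont hderFt hintsum hlimtop
  have hFt0 : Ft 0 = L := by simp [hFtdef]
  rw [hFt0] at key
  have hsplit : ∫ x in Ioi (0:ℝ), (g1 x + g2 x) = (∫ x in Ioi (0:ℝ), g1 x) + ∫ x in Ioi (0:ℝ), g2 x :=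
    integral_add hint1 hint2
  rw [hsplit] at key
  rw [hLdef] at key
  linarith [key]
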